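/- arXiv:1810.03119 — 2 statements merged into one kernel-verified Lean document; each statement's English description precedes it below -/
import Mathlib

section
/- Let G be a chordal graph and v any vertex of G. Then the graph G_v is chordal. -/
/-- `G` has an induced cycle of length `n`, i.e. an injective map from `ZMod n` to the
vertices such that images are adjacent exactly when the indices are consecutive. -/
def SimpleGraph.HasInducedCycle {V : Type*} (G : SimpleGraph V) (n : ℕ) : Prop :=
  ∃ f : ZMod n → V, Function.Injective f ∧
    ∀ i j : ZMod n, G.Adj (f i) (f j) ↔ (j = i + 1 ∨ i = j + 1)

/-- A graph is chordal if it has no induced cycle of length greater than 3. -/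
def SimpleGraph.Chordal {V : Type*} (G : SimpleGraph V) : Prop :=
  ∀ n : ℕ, 4 ≤ n → ¬ G.HasInducedCycle n

/-- The graph `G_v` on the vertex set of `G`, whose edges are those of `G` together with all
pairs of distinct neighbours of `v`. -/
def SimpleGraph.gv {V : Type*} (G : SimpleGraph V) (v : V) : SimpleGraph V where
  Adj u w := u ≠ w ∧ (G.Adj u w ∨ (G.Adj v u ∧ G.Adj v w))
  symm := by
    constructor
    rintro u w ⟨h1, h2⟩
    exact ⟨h1.symm, h2.imp (fun h => h.symm) (fun h => ⟨h.2, h.1⟩)⟩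
  loopless := ⟨fun u h => h.1 rfl⟩


/-!
Let `C` be an induced cycle of length at least 4 in `G_v`. If all edges of `C` lie in `G`, then
`C` is an induced cycle of `G`. Otherwise some edge `xy` of `C` is new, so `x` and `y` are
neighbours of `v`. In `G_v` the closed neighbourhood of `v` is a clique, and a clique meets an
induced cycle of length at least 4 in at most the two ends of an edge. Hence `v` is not on `C`,
its only neighbours on `C` are `x` and `y`, and every other edge of `C` is an edge of `G`. So
`C - xy` is an induced path of `G` from `y` to `x`, which `v` closes to an induced cycle of `G`
one longer than `C`.
-/

theorem Fin.eq_add_one_and_ne_last_iff {m : ℕ} {k l : Fin (m + 1)} :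
    l = k + 1 ∧ k ≠ Fin.last m ↔ l.val = k.val + 1 := by
  constructor
  · rintro ⟨rfl, hk⟩
    exact Fin.val_add_one_of_lt (Fin.lt_last_iff_ne_last.2 hk)
  · intro h
    have hk : k ≠ Fin.last m := by
      rintro rfl
      have := l.is_lt
      simp at h
      omega
    exact ⟨Fin.ext (by rw [h, Fin.val_add_one_of_lt (Fin.lt_last_iff_ne_last.2 hk)]), hk⟩

namespace SimpleGraph

variable {V : Type*} {G H : SimpleGraph V} {m : ℕ}

def IsInducedCycle (G : SimpleGraph V) (f : Fin (m + 1) → V) : Prop :=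
  Function.Injective f ∧ ∀ i j, G.Adj (f i) (f j) ↔ (j = i + 1 ∨ i = j + 1)

def IsInducedPath (G : SimpleGraph V) (p : Fin m → V) : Prop :=
  Function.Injective p ∧
    ∀ k l : Fin m, G.Adj (p k) (p l) ↔ (l.val = k.val + 1 ∨ k.val = l.val + 1)

-- `ZMod (m + 1)` is `Fin (m + 1)` by definition.
theorem hasInducedCycle_succ_iff :
    G.HasInducedCycle (m + 1) ↔ ∃ f : Fin (m + 1) → V, G.IsInducedCycle f :=
  Iff.rfl

namespace IsInducedCycle

variable {f : Fin (m + 1) → V}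

theorem adj_add_one (hf : G.IsInducedCycle f) (i : Fin (m + 1)) : G.Adj (f i) (f (i + 1)) :=
  (hf.2 i (i + 1)).2 (Or.inl rfl)

theorem comp_add_right (hf : G.IsInducedCycle f) (c : Fin (m + 1)) :
    G.IsInducedCycle (fun i => f (i + c)) := by
  refine ⟨hf.1.comp (add_left_injective c), fun i j => ?_⟩
  simp only [hf.2, add_right_comm _ c 1, add_left_inj]

theorem of_le (hf : H.IsInducedCycle f) (hGH : G ≤ H) (hG : ∀ i, G.Adj (f i) (f (i + 1))) :
    G.IsInducedCycle f := by
  refine ⟨hf.1, fun i j => ⟨fun h => (hf.2 i j).1 (hGH h), ?_⟩⟩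
  rintro (rfl | rfl)
  exacts [hG i, (hG j).symm]

open Fin.CommRing in
theorem eq_or_eq_add_one_of_isClique (hf : G.IsInducedCycle f) (hm : 3 ≤ m) {s : Set V}
    (hs : G.IsClique s) {i j : Fin (m + 1)} (hi : f i ∈ s) (hi' : f (i + 1) ∈ s)
    (hj : f j ∈ s) : j = i ∨ j = i + 1 := by
  by_contra! ⟨hji, hji'⟩
  have hi_eq : i = j + 1 := ((hf.2 j i).1 (hs hj hi (hf.1.ne hji))).resolve_right hji'
  have hj_eq : j = i + 1 + 1 := by
    refine ((hf.2 j (i + 1)).1 (hs hj hi' (hf.1.ne hji'))).resolve_left fun h => hji ?_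
    exact (add_right_cancel h).symm
  have h3 : (3 : Fin (m + 1)) ≠ 0 := by
    simp [Fin.ext_iff, Nat.mod_eq_of_lt (show 3 < m + 1 by omega)]
  exact h3 (by linear_combination -hi_eq - hj_eq)

theorem isInducedPath_of_le (hf : H.IsInducedCycle f) (hGH : G ≤ H)
    (hG : ∀ i ≠ Fin.last m, G.Adj (f i) (f (i + 1))) (hlast : ¬ G.Adj (f (Fin.last m)) (f 0)) :
    G.IsInducedPath f := by
  refine ⟨hf.1, fun k l => ?_⟩
  have key : G.Adj (f k) (f l) ↔
      (l = k + 1 ∧ k ≠ Fin.last m) ∨ (k = l + 1 ∧ l ≠ Fin.last m) := by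
    constructor
    · intro h
      rcases (hf.2 k l).1 (hGH h) with rfl | rfl
      · refine Or.inl ⟨rfl, ?_⟩
        rintro rfl
        exact hlast (by simpa using h)
      · refine Or.inr ⟨rfl, ?_⟩
        rintro rfl
        exact hlast (by simpa using h.symm)
    · rintro (⟨rfl, hk⟩ | ⟨rfl, hl⟩)
      exacts [hG k hk, (hG l hl).symm]
  rw [key, Fin.eq_add_one_and_ne_last_iff, Fin.eq_add_one_and_ne_last_iff]

end IsInducedCycle

theorem IsInducedPath.isInducedCycle_snoc {p : Fin (m + 1) → V} (hp : G.IsInducedPath p) {w : V}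
    (hw : w ∉ Set.range p) (hadj : ∀ k, G.Adj (p k) w ↔ k = 0 ∨ k = Fin.last m) :
    G.IsInducedCycle (Fin.snoc p w : Fin (m + 2) → V) := by
  refine ⟨Fin.snoc_injective_iff.2 ⟨hp.1, hw⟩, fun i j => ?_⟩
  induction i using Fin.lastCases <;> induction j using Fin.lastCases
  · simp
  · simp [G.adj_comm w, hadj, Fin.coeSucc_eq_succ, eq_comm (a := Fin.last _),
      Fin.succ_eq_last_succ, or_comm]
  · simp [hadj, Fin.coeSucc_eq_succ, eq_comm (a := Fin.last _), Fin.succ_eq_last_succ, or_comm]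
  · simp [hp.2, Fin.coeSucc_eq_succ, Fin.ext_iff]

theorem le_gv (G : SimpleGraph V) (v : V) : G ≤ G.gv v :=
  fun _ _ h => ⟨h.ne, Or.inl h⟩

theorem isClique_gv_insert_neighborSet (G : SimpleGraph V) (v : V) :
    (G.gv v).IsClique (insert v (G.neighborSet v)) := by
  rintro a (rfl | ha) b (rfl | hb) hab
  · exact absurd rfl hab
  · exact le_gv G a hb
  · exact (le_gv G b ha).symm
  · exact ⟨hab, Or.inr ⟨ha, hb⟩⟩

theorem IsInducedCycle.hasInducedCycle_of_gv {v : V} {f : Fin (m + 1) → V}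
    (hf : (G.gv v).IsInducedCycle f) (hm : 3 ≤ m) (hlast : ¬ G.Adj (f (Fin.last m)) (f 0)) :
    G.HasInducedCycle (m + 2) := by
  have hv : G.Adj v (f (Fin.last m)) ∧ G.Adj v (f 0) := by
    simpa using (hf.adj_add_one (Fin.last m)).2.resolve_left (by simpa using hlast)
  have hmem : ∀ k, f k ∈ insert v (G.neighborSet v) → k = Fin.last m ∨ k = 0 := by
    intro k hk
    simpa using hf.eq_or_eq_add_one_of_isClique hm (G.isClique_gv_insert_neighborSet v)
      (Or.inr hv.1) (by simpa using Or.inr hv.2) hk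
  have hnbr : ∀ k, G.Adj v (f k) ↔ k = Fin.last m ∨ k = 0 := fun k =>
    ⟨fun hk => hmem k (Or.inr hk), by rintro (rfl | rfl); exacts [hv.1, hv.2]⟩
  have hoff : v ∉ Set.range f := by
    rintro ⟨k, hk⟩
    rcases hmem k (Or.inl hk) with rfl | rfl
    exacts [G.irrefl (hk ▸ hv.1), G.irrefl (hk ▸ hv.2)]
  have hedges : ∀ k ≠ Fin.last m, G.Adj (f k) (f (k + 1)) := by
    intro k hk
    refine (hf.adj_add_one k).2.resolve_right fun ⟨hk_nbr, hk1_nbr⟩ => ?_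
    obtain rfl : k = 0 := ((hnbr k).1 hk_nbr).resolve_left hk
    have h1 := (hnbr _).1 hk1_nbr
    simp [Fin.ext_iff, Nat.mod_eq_of_lt (show 1 < m + 1 by omega)] at h1
    omega
  have hpath : G.IsInducedPath f := hf.isInducedPath_of_le (G.le_gv v) hedges hlast
  refine hasInducedCycle_succ_iff.2 ⟨_, hpath.isInducedCycle_snoc hoff fun k => ?_⟩
  rw [G.adj_comm, hnbr, or_comm]

end SimpleGraph

theorem gv_chordal_general {V : Type*} (G : SimpleGraph V) (hG : G.Chordal) (v : V) :
    (G.gv v).Chordal := by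
  intro n hn hcycle
  obtain ⟨m, rfl⟩ : ∃ m, n = m + 1 := ⟨n - 1, by omega⟩
  obtain ⟨f, hf⟩ := SimpleGraph.hasInducedCycle_succ_iff.1 hcycle
  by_cases hG_edges : ∀ i, G.Adj (f i) (f (i + 1))
  · exact hG (m + 1) hn
      (SimpleGraph.hasInducedCycle_succ_iff.2 ⟨f, hf.of_le (G.le_gv v) hG_edges⟩)
  obtain ⟨i, hi⟩ := not_forall.1 hG_edges
  refine hG (m + 2) (by omega) ((hf.comp_add_right (i + 1)).hasInducedCycle_of_gv (by omega) ?_)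
  simpa [add_comm i, ← add_assoc] using hi

/-- Let `G` be a chordal graph and `v` any vertex of `G`.  Then the graph `G_v` is chordal. -/
theorem gv_chordal {V : Type*} [Fintype V] (G : SimpleGraph V) (hG : G.Chordal) (v : V) :
    (G.gv v).Chordal :=
  gv_chordal_general G hG v
end

section
/- Let G be a graph and v a vertex of G. Then the intersection of the ideals P_T(G) over all subsets T ⊆ V(G) with v ∈ T equals (x_v, y_v) + J_{G−v}, where G − v is the induced subgraph of G on V(G)\{v} and J_{G−v} is regarded as an ideal of S. -/
/-- The graph obtained from `G` by removing all edges meeting `T`.  Vertices of `T` become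
isolated, and the connected components of vertices outside of `T` are exactly the connected
components of the induced subgraph `G - T`; in particular two vertices `u, w ∉ T` lie in the
same connected component of `G - T` iff they are reachable in `G.avoid T`. -/
def SimpleGraph.avoid {V : Type*} (G : SimpleGraph V) (T : Set V) : SimpleGraph V where
  Adj u w := G.Adj u w ∧ u ∉ T ∧ w ∉ T
  symm := ⟨fun _ _ h => ⟨h.1.symm, h.2.2, h.2.1⟩⟩
  loopless := ⟨fun u h => G.loopless.irrefl u h.1⟩

/-- The binomial `f_{ij} = x_i y_j - x_j y_i` in `S = K[x_1,…,x_n,y_1,…,y_n]`, where the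
polynomial ring is realized as `MvPolynomial (V ⊕ V) K`, `x_i = X (Sum.inl i)` and
`y_i = X (Sum.inr i)`. -/
noncomputable def edgeBinomial (K : Type*) [Field K] {V : Type*} (i j : V) :
    MvPolynomial (V ⊕ V) K :=
  MvPolynomial.X (Sum.inl i) * MvPolynomial.X (Sum.inr j) -
    MvPolynomial.X (Sum.inl j) * MvPolynomial.X (Sum.inr i)

/-- The binomial edge ideal `J_G` of a graph `G`, generated by the binomials
`f_{ij} = x_i y_j - x_j y_i` for all edges `{i,j}` of `G`. -/
noncomputable def binomialEdgeIdeal (K : Type*) [Field K] {V : Type*} (G : SimpleGraph V) :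
    Ideal (MvPolynomial (V ⊕ V) K) :=
  Ideal.span {f | ∃ i j : V, G.Adj i j ∧ f = edgeBinomial K i j}

/-- The ideal `P_T(G) = (x_v, y_v : v ∈ T) + J_{K_1} + … + J_{K_{c(T)}}`, where
`K_1, …, K_{c(T)}` are the complete graphs on the vertex sets of the connected components
of `G - T`; equivalently, it is generated by the variables `x_v, y_v` for `v ∈ T` together
with the binomials `f_{uw}` for all pairs of distinct vertices `u, w ∉ T` lying in the same
connected component of `G - T`. -/
noncomputable def primeIdealP (K : Type*) [Field K] {V : Type*} (G : SimpleGraph V)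
    (T : Set V) : Ideal (MvPolynomial (V ⊕ V) K) :=
  Ideal.span
    ({f | ∃ v ∈ T, f = MvPolynomial.X (Sum.inl v) ∨ f = MvPolynomial.X (Sum.inr v)} ∪
      {f | ∃ u w : V, u ∉ T ∧ w ∉ T ∧ u ≠ w ∧ (G.avoid T).Reachable u w ∧
        f = edgeBinomial K u w})

/-!
The inclusion `⊇` holds because `x_v, y_v ∈ P_T(G)` for `v ∈ T` and `J_{G-v} ⊆ J_G ⊆ P_T(G)`.
For `⊆`, the substitution `x_v, y_v ↦ 0` is the identity modulo `(x_v, y_v)` and maps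
`P_{T ∪ {v}}(G)` into `P_T(G - v)`, so the claim reduces to the decomposition
`J_H = ⋂_T P_T(H)` for `H = G - v`.

That decomposition is proved by well-founded induction on the number of non-isolated vertices
and then the number of non-edges. If every neighbourhood of `H` is a clique, the components
of `H` are complete and `J_H = P_∅(H)`. Otherwise let `H_v` be `H` with the neighbourhood of
some `v` completed. An element of `⋂_T P_T(H)` lies in `⋂_T P_T(H_v) = J_{H_v}` and, by the
argument above, in `(x_v, y_v) + J_{H-v}`; by Ohtani's lemma
`J_{H_v} ∩ ((x_v, y_v) + J_{H-v}) ⊆ J_H`.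
-/

open MvPolynomial

namespace SimpleGraph

variable {V : Type*} {G G' : SimpleGraph V} {T : Set V} {u v w : V}

theorem avoid_adj {a b : V} : (G.avoid T).Adj a b ↔ G.Adj a b ∧ a ∉ T ∧ b ∉ T := Iff.rfl

theorem avoid_le (G : SimpleGraph V) (T : Set V) : G.avoid T ≤ G := fun _ _ h => h.1

theorem avoid_mono (h : G ≤ G') (T : Set V) : G.avoid T ≤ G'.avoid T :=
  fun _ _ hadj => ⟨h hadj.1, hadj.2⟩

@[simp] theorem avoid_empty (G : SimpleGraph V) : G.avoid ∅ = G := by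
  ext; simp [avoid]

theorem avoid_insert (G : SimpleGraph V) (v : V) (T : Set V) :
    G.avoid (insert v T) = (G.avoid {v}).avoid T := by
  ext; simp only [avoid, Set.mem_insert_iff, Set.mem_singleton_iff]; tauto

def completeNbhd (G : SimpleGraph V) (v : V) : SimpleGraph V :=
  G ⊔ fromRel fun a b => G.Adj v a ∧ G.Adj v b

theorem completeNbhd_adj {a b : V} :
    (G.completeNbhd v).Adj a b ↔ G.Adj a b ∨ a ≠ b ∧ G.Adj v a ∧ G.Adj v b := by
  simp [completeNbhd, fromRel_adj, and_comm]

theorem le_completeNbhd (G : SimpleGraph V) (v : V) : G ≤ G.completeNbhd v := le_sup_left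

theorem neighborSet_completeNbhd_self :
    (G.completeNbhd v).neighborSet v = G.neighborSet v := by
  ext a
  simp only [mem_neighborSet, completeNbhd_adj]
  exact ⟨fun h => h.elim id fun h => h.2.2, .inl⟩

theorem isClique_neighborSet_completeNbhd :
    (G.completeNbhd v).IsClique ((G.completeNbhd v).neighborSet v) := by
  rw [neighborSet_completeNbhd_self]
  exact fun a ha b hb hab => completeNbhd_adj.2 (.inr ⟨hab, ha, hb⟩)

theorem support_completeNbhd : (G.completeNbhd v).support = G.support := by
  ext a
  simp only [mem_support, completeNbhd_adj]
  exact ⟨fun ⟨b, h⟩ => h.elim (⟨b, ·⟩) fun h => ⟨v, h.2.1.symm⟩, fun ⟨b, h⟩ => ⟨b, .inl h⟩⟩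

theorem lt_completeNbhd (h : ¬ G.IsClique (G.neighborSet v)) : G < G.completeNbhd v := by
  refine lt_of_le_of_ne (le_completeNbhd G v) fun heq => h ?_
  have hc := isClique_neighborSet_completeNbhd (G := G) (v := v)
  rwa [← heq] at hc

theorem support_avoid_singleton_ssubset (h : G.Adj v u) : (G.avoid {v}).support ⊂ G.support :=
  ⟨fun _ ⟨b, hb⟩ => ⟨b, hb.1⟩, fun hsub => by
    obtain ⟨_, hb⟩ := hsub ⟨u, h⟩
    exact hb.2.1 rfl⟩

theorem Reachable.adj_of_forall_isClique (hG : ∀ v, G.IsClique (G.neighborSet v))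
    (h : G.Reachable u w) (hne : u ≠ w) : G.Adj u w := by
  obtain ⟨p⟩ := h
  induction p with
  | nil => exact absurd rfl hne
  | @cons a b c hab _ ih =>
    by_cases hbc : b = c
    · exact hbc ▸ hab
    · exact hG b hab.symm (ih hbc) hne

/-- A walk avoiding `T \ {v}` that passes through `v` can shortcut across the clique `N(v)`. -/
theorem Reachable.avoid_of_avoid_diff_singleton (hv : v ∈ T) (hN : G.IsClique (G.neighborSet v))
    (h : (G.avoid (T \ {v})).Reachable u w) (hu : u ∉ T) (hw : w ∉ T) :
    (G.avoid T).Reachable u w := by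
  have key : ∀ {a} (_ : (G.avoid (T \ {v})).Walk a w) (x : V), x ∉ T →
      x = a ∨ a = v ∧ G.Adj v x → (G.avoid T).Reachable x w := by
    clear h
    intro a p
    induction p with
    | nil => rintro x hx (rfl | ⟨rfl, -⟩); exacts [.rfl, absurd hv hw]
    | @cons a b c hab _ ih =>
      rintro x hx (rfl | ⟨rfl, hvx⟩)
      · by_cases hb : b ∈ T
        · obtain rfl : b = v := by_contra fun hbv => hab.2.2 ⟨hb, hbv⟩
          exact ih hw x hx (.inr ⟨rfl, hab.1.symm⟩)
        · exact (avoid_adj.2 ⟨hab.1, hx, hb⟩).reachable.trans (ih hw b hb (.inl rfl))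
      · have hb : b ∉ T := fun hb => hab.2.2 ⟨hb, hab.1.ne.symm⟩
        by_cases hxb : x = b
        · exact ih hw x hx (.inl hxb)
        · exact (avoid_adj.2 ⟨hN hvx hab.1 hxb, hx, hb⟩).reachable.trans (ih hw b hb (.inl rfl))
  obtain ⟨p⟩ := h
  exact key p u hu (.inl rfl)

end SimpleGraph

theorem Ideal.sub_mem_mul_span_of_map_eq_self {R F : Type*} [CommRing R] [FunLike F R R]
    [RingHomClass F R R] (k : F) {I : Ideal R} (hI : ∀ c, c - k c ∈ I) {s : Set R}
    (hs : ∀ x ∈ s, k x = x) {a : R} (ha : a ∈ Ideal.span s) : a - k a ∈ I * Ideal.span s := by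
  have hk : ∀ b ∈ Ideal.span s, k b ∈ Ideal.span s := fun b hb => by
    have := Ideal.mem_map_of_mem k hb
    rwa [Ideal.map_span, Set.image_congr hs, Set.image_id'] at this
  induction ha using Submodule.span_induction with
  | mem x hx => simp [hs x hx]
  | zero => simp
  | add x y _ _ hx hy => simpa [add_sub_add_comm] using add_mem hx hy
  | smul c x hx ih =>
    have : c * x - k c * k x = c * (x - k x) + (c - k c) * k x := by ring
    rw [smul_eq_mul, map_mul, this]
    exact add_mem (Ideal.mul_mem_left _ c ih) (Ideal.mul_mem_mul (hI c) (hk x hx))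

section BinomialEdgeIdeal

variable {V : Type*} (K : Type*) [Field K] {G G' : SimpleGraph V} {T : Set V} {u v w : V}

local notation "𝔭" v => Ideal.span {(X (Sum.inl v) : MvPolynomial (_ ⊕ _) K), X (Sum.inr v)}

theorem edgeBinomial_swap (i j : V) : edgeBinomial K j i = -edgeBinomial K i j := by
  simp only [edgeBinomial]; ring

theorem X_inl_mul_edgeBinomial (v a b : V) :
    X (Sum.inl v) * edgeBinomial K a b =
      X (Sum.inl a) * edgeBinomial K v b - X (Sum.inl b) * edgeBinomial K v a := by
  simp only [edgeBinomial]; ring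

theorem X_inr_mul_edgeBinomial (v a b : V) :
    X (Sum.inr v) * edgeBinomial K a b =
      X (Sum.inr a) * edgeBinomial K v b - X (Sum.inr b) * edgeBinomial K v a := by
  simp only [edgeBinomial]; ring

theorem edgeBinomial_mem_span_X (i j : V) : edgeBinomial K i j ∈ 𝔭 i :=
  sub_mem (Ideal.mul_mem_right _ _ (Ideal.subset_span (by simp)))
    (Ideal.mul_mem_left _ _ (Ideal.subset_span (by simp)))

theorem edgeBinomial_mem_binomialEdgeIdeal {i j : V} (h : G.Adj i j) :
    edgeBinomial K i j ∈ binomialEdgeIdeal K G :=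
  Ideal.subset_span ⟨i, j, h, rfl⟩

theorem binomialEdgeIdeal_mono (h : G ≤ G') : binomialEdgeIdeal K G ≤ binomialEdgeIdeal K G' :=
  Ideal.span_le.2 fun _ ⟨_, _, hij, hf⟩ => hf ▸ edgeBinomial_mem_binomialEdgeIdeal K (h hij)

theorem X_mem_primeIdealP (hu : u ∈ T) :
    (X (Sum.inl u) : MvPolynomial (V ⊕ V) K) ∈ primeIdealP K G T ∧
      (X (Sum.inr u) : MvPolynomial (V ⊕ V) K) ∈ primeIdealP K G T :=
  ⟨Ideal.subset_span (.inl ⟨u, hu, .inl rfl⟩), Ideal.subset_span (.inl ⟨u, hu, .inr rfl⟩)⟩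

theorem span_X_le_primeIdealP (hu : u ∈ T) : (𝔭 u) ≤ primeIdealP K G T := by
  simpa [Ideal.span_le, Set.insert_subset_iff] using X_mem_primeIdealP K (G := G) hu

theorem edgeBinomial_mem_primeIdealP (hu : u ∉ T) (hw : w ∉ T) (hne : u ≠ w)
    (hr : (G.avoid T).Reachable u w) : edgeBinomial K u w ∈ primeIdealP K G T :=
  Ideal.subset_span (.inr ⟨u, w, hu, hw, hne, hr, rfl⟩)

theorem edgeBinomial_mem_primeIdealP_of_mem (hu : u ∈ T) (w : V) :
    edgeBinomial K u w ∈ primeIdealP K G T ∧ edgeBinomial K w u ∈ primeIdealP K G T := by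
  have h := span_X_le_primeIdealP K (G := G) hu (edgeBinomial_mem_span_X K u w)
  exact ⟨h, edgeBinomial_swap K u w ▸ neg_mem h⟩

theorem binomialEdgeIdeal_le_primeIdealP (G : SimpleGraph V) (T : Set V) :
    binomialEdgeIdeal K G ≤ primeIdealP K G T := by
  refine Ideal.span_le.2 ?_
  rintro _ ⟨i, j, hij, rfl⟩
  by_cases hi : i ∈ T
  · exact (edgeBinomial_mem_primeIdealP_of_mem K hi j).1
  by_cases hj : j ∈ T
  · exact (edgeBinomial_mem_primeIdealP_of_mem K hj i).2
  · exact edgeBinomial_mem_primeIdealP K hi hj hij.ne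
      (SimpleGraph.avoid_adj.2 ⟨hij, hi, hj⟩).reachable

theorem primeIdealP_mono (h : G ≤ G') (T : Set V) : primeIdealP K G T ≤ primeIdealP K G' T := by
  refine Ideal.span_le.2 ?_
  rintro f (hf | ⟨u, w, hu, hw, hne, hr, rfl⟩)
  · exact Ideal.subset_span (.inl hf)
  · exact edgeBinomial_mem_primeIdealP K hu hw hne (hr.mono (SimpleGraph.avoid_mono h T))

theorem primeIdealP_empty_le (hG : ∀ v, G.IsClique (G.neighborSet v)) :
    primeIdealP K G ∅ ≤ binomialEdgeIdeal K G := by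
  refine Ideal.span_le.2 ?_
  rintro f (⟨u, hu, _⟩ | ⟨u, w, -, -, hne, hr, rfl⟩)
  · exact absurd hu (Set.notMem_empty u)
  · rw [SimpleGraph.avoid_empty] at hr
    exact edgeBinomial_mem_binomialEdgeIdeal K (hr.adj_of_forall_isClique hG hne)

theorem primeIdealP_diff_singleton_le (hv : v ∈ T) (hN : G.IsClique (G.neighborSet v)) :
    primeIdealP K G (T \ {v}) ≤ primeIdealP K G T := by
  refine Ideal.span_le.2 ?_
  rintro f (⟨u, hu, rfl | rfl⟩ | ⟨u, w, hu, hw, hne, hr, rfl⟩)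
  · exact (X_mem_primeIdealP K hu.1).1
  · exact (X_mem_primeIdealP K hu.1).2
  · by_cases huv : u = v
    · exact (edgeBinomial_mem_primeIdealP_of_mem K (huv ▸ hv) w).1
    by_cases hwv : w = v
    · exact (edgeBinomial_mem_primeIdealP_of_mem K (hwv ▸ hv) u).2
    have hu' : u ∉ T := fun h => hu ⟨h, huv⟩
    have hw' : w ∉ T := fun h => hw ⟨h, hwv⟩
    exact edgeBinomial_mem_primeIdealP K hu' hw' hne
      (hr.avoid_of_avoid_diff_singleton hv hN hu' hw')

theorem iInf_primeIdealP_le_completeNbhd (G : SimpleGraph V) (v : V) :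
    ⨅ T, primeIdealP K G T ≤ ⨅ T, primeIdealP K (G.completeNbhd v) T := by
  refine le_iInf fun T => ?_
  have hle := primeIdealP_mono K (G.le_completeNbhd v)
  by_cases hv : v ∈ T
  · exact (iInf_le _ (T \ {v})).trans <| (hle _).trans <|
      primeIdealP_diff_singleton_le K hv SimpleGraph.isClique_neighborSet_completeNbhd
  · exact (iInf_le _ T).trans (hle T)

section killVertex

variable [DecidableEq V]

noncomputable def killVertex (v : V) : MvPolynomial (V ⊕ V) K →ₐ[K] MvPolynomial (V ⊕ V) K :=
  aeval fun s => if Sum.elim id id s = v then 0 else X s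

@[simp] theorem killVertex_X_inl (u : V) :
    killVertex K v (X (Sum.inl u)) = if u = v then 0 else X (Sum.inl u) := by
  by_cases h : u = v <;> simp [killVertex, h]

@[simp] theorem killVertex_X_inr (u : V) :
    killVertex K v (X (Sum.inr u)) = if u = v then 0 else X (Sum.inr u) := by
  by_cases h : u = v <;> simp [killVertex, h]

theorem killVertex_edgeBinomial (i j : V) :
    killVertex K v (edgeBinomial K i j) = if i = v ∨ j = v then 0 else edgeBinomial K i j := by
  by_cases hi : i = v <;> by_cases hj : j = v <;> simp [edgeBinomial, hi, hj]

theorem killVertex_eq_zero_of_mem {f : MvPolynomial (V ⊕ V) K} (hf : f ∈ 𝔭 v) :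
    killVertex K v f = 0 := by
  obtain ⟨a, b, rfl⟩ := Ideal.mem_span_pair.1 hf
  simp

theorem sub_killVertex_mem (f : MvPolynomial (V ⊕ V) K) : f - killVertex K v f ∈ 𝔭 v := by
  have hmk : (Ideal.Quotient.mkₐ K (𝔭 v)).comp (killVertex K v) = Ideal.Quotient.mkₐ K (𝔭 v) := by
    ext (u | u) <;> by_cases hu : u = v <;> simp only [AlgHom.comp_apply, killVertex_X_inl,
      killVertex_X_inr, hu, if_true, if_false, map_zero] <;>
      exact (Ideal.Quotient.eq_zero_iff_mem.2 (Ideal.subset_span (by simp))).symm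
  rw [← Ideal.Quotient.eq, ← Ideal.Quotient.mkₐ_eq_mk K]
  exact (DFunLike.congr_fun hmk f).symm

theorem map_killVertex_binomialEdgeIdeal (G : SimpleGraph V) (v : V) :
    (binomialEdgeIdeal K G).map (killVertex K v) ≤ binomialEdgeIdeal K (G.avoid {v}) := by
  rw [binomialEdgeIdeal, Ideal.map_span, Ideal.span_le]
  rintro _ ⟨_, ⟨i, j, hij, rfl⟩, rfl⟩
  rw [killVertex_edgeBinomial]
  split_ifs with h
  · exact zero_mem _
  · push Not at h
    exact edgeBinomial_mem_binomialEdgeIdeal K ⟨hij, h.1, h.2⟩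

theorem map_killVertex_primeIdealP (G : SimpleGraph V) (v : V) (T : Set V) :
    (primeIdealP K G (insert v T)).map (killVertex K v) ≤ primeIdealP K (G.avoid {v}) T := by
  rw [primeIdealP, Ideal.map_span, Ideal.span_le]
  rintro _ ⟨_, ⟨u, hu, rfl | rfl⟩ | ⟨u, w, hu, hw, hne, hr, rfl⟩, rfl⟩
  · by_cases huv : u = v
    · simp [huv]
    · simpa [huv] using (X_mem_primeIdealP K (hu.resolve_left huv)).1
  · by_cases huv : u = v
    · simp [huv]
    · simpa [huv] using (X_mem_primeIdealP K (hu.resolve_left huv)).2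
  · simp only [Set.mem_insert_iff, not_or] at hu hw
    rw [killVertex_edgeBinomial, if_neg (by tauto)]
    exact edgeBinomial_mem_primeIdealP K hu.2 hw.2 hne (G.avoid_insert v T ▸ hr)

end killVertex

theorem binomialEdgeIdeal_completeNbhd_le :
    binomialEdgeIdeal K (G.completeNbhd v) ≤ binomialEdgeIdeal K G ⊔
      Ideal.span {f | ∃ a b, G.Adj v a ∧ G.Adj v b ∧ f = edgeBinomial K a b} := by
  refine Ideal.span_le.2 ?_
  rintro _ ⟨i, j, hij, rfl⟩
  rcases SimpleGraph.completeNbhd_adj.1 hij with h | ⟨-, hi, hj⟩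
  · exact Ideal.mem_sup_left (edgeBinomial_mem_binomialEdgeIdeal K h)
  · exact Ideal.mem_sup_right (Ideal.subset_span ⟨i, j, hi, hj, rfl⟩)

theorem span_X_mul_span_edgeBinomial_le :
    ((𝔭 v) * Ideal.span {f | ∃ a b, G.Adj v a ∧ G.Adj v b ∧ f = edgeBinomial K a b}) ≤
      binomialEdgeIdeal K G := by
  rw [Ideal.span_mul_span', Ideal.span_le]
  rintro _ ⟨x, hx, _, ⟨a, b, ha, hb, rfl⟩, rfl⟩
  have hva := edgeBinomial_mem_binomialEdgeIdeal K ha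
  have hvb := edgeBinomial_mem_binomialEdgeIdeal K hb
  rcases hx with rfl | rfl
  · show X _ * _ ∈ _
    rw [X_inl_mul_edgeBinomial]
    exact sub_mem (Ideal.mul_mem_left _ _ hvb) (Ideal.mul_mem_left _ _ hva)
  · show X _ * _ ∈ _
    rw [X_inr_mul_edgeBinomial]
    exact sub_mem (Ideal.mul_mem_left _ _ hvb) (Ideal.mul_mem_left _ _ hva)

/-- Ohtani's lemma. Write `f = j + a` with `j ∈ J_G` and `a` in the ideal `A` of the new
binomials, and let `κ` be the substitution `x_v, y_v ↦ 0`. Then `j ≡ κ j` modulo `J_G` since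
`κ(J_G) ⊆ J_{G-v}`, and `a ≡ κ a` modulo `(x_v, y_v) A ⊆ J_G` since `κ` fixes the generators
of `A`; finally `κ f ∈ J_{G-v}` by `h₂`. -/
theorem mem_binomialEdgeIdeal_of_mem_completeNbhd {f : MvPolynomial (V ⊕ V) K}
    (h₁ : f ∈ binomialEdgeIdeal K (G.completeNbhd v))
    (h₂ : f ∈ (𝔭 v) ⊔ binomialEdgeIdeal K (G.avoid {v})) : f ∈ binomialEdgeIdeal K G := by
  classical
  have hJ : (binomialEdgeIdeal K G).map (killVertex K v) ≤ binomialEdgeIdeal K G :=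
    (map_killVertex_binomialEdgeIdeal K G v).trans (binomialEdgeIdeal_mono K (G.avoid_le _))
  have hkf : killVertex K v f ∈ binomialEdgeIdeal K G := by
    obtain ⟨p, hp, g, hg, rfl⟩ := Submodule.mem_sup.1 h₂
    rw [map_add, killVertex_eq_zero_of_mem K hp, zero_add]
    exact hJ (Ideal.mem_map_of_mem _ (binomialEdgeIdeal_mono K (G.avoid_le _) hg))
  obtain ⟨j, hj, a, ha, rfl⟩ := Submodule.mem_sup.1 (binomialEdgeIdeal_completeNbhd_le K h₁)
  have hj' : j - killVertex K v j ∈ binomialEdgeIdeal K G :=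
    sub_mem hj (hJ (Ideal.mem_map_of_mem _ hj))
  have ha' : a - killVertex K v a ∈ binomialEdgeIdeal K G := by
    refine span_X_mul_span_edgeBinomial_le K
      (Ideal.sub_mem_mul_span_of_map_eq_self _ (sub_killVertex_mem K) ?_ ha)
    rintro _ ⟨b, c, hb, hc, rfl⟩
    rw [killVertex_edgeBinomial, if_neg]
    rintro (rfl | rfl)
    exacts [hb.ne rfl, hc.ne rfl]
  have : j + a = (j - killVertex K v j) + (a - killVertex K v a) + killVertex K v (j + a) := by
    rw [map_add]; ring
  rw [this]
  exact add_mem (add_mem hj' ha') hkf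

theorem iInf_primeIdealP_le_sup
    (hG : ⨅ T, primeIdealP K (G.avoid {v}) T = binomialEdgeIdeal K (G.avoid {v})) :
    ⨅ T ∈ {T : Set V | v ∈ T}, primeIdealP K G T ≤ (𝔭 v) ⊔ binomialEdgeIdeal K (G.avoid {v}) := by
  classical
  intro f hf
  simp only [Submodule.mem_iInf] at hf
  have hk : killVertex K v f ∈ binomialEdgeIdeal K (G.avoid {v}) := by
    rw [← hG, Submodule.mem_iInf]
    exact fun T => map_killVertex_primeIdealP K G v T
      (Ideal.mem_map_of_mem _ (hf _ (Set.mem_insert v T)))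
  simpa using Submodule.add_mem_sup (sub_killVertex_mem K (v := v) f) hk

theorem iInf_primeIdealP_eq_binomialEdgeIdeal [Finite V] (G : SimpleGraph V) :
    ⨅ T, primeIdealP K G T = binomialEdgeIdeal K G := by
  refine le_antisymm ?_ (le_iInf (binomialEdgeIdeal_le_primeIdealP K G))
  by_cases hG : ∀ v, G.IsClique (G.neighborSet v)
  · exact (iInf_le _ ∅).trans (primeIdealP_empty_le K hG)
  obtain ⟨v, hv⟩ := not_forall.1 hG
  obtain ⟨u, hu⟩ : ∃ u, G.Adj v u := by
    by_contra! h
    exact hv fun a ha => absurd ha (h a)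
  intro f hf
  have h₁ : f ∈ binomialEdgeIdeal K (G.completeNbhd v) := by
    rw [← iInf_primeIdealP_eq_binomialEdgeIdeal (G.completeNbhd v)]
    exact iInf_primeIdealP_le_completeNbhd K G v hf
  have h₂ := iInf_primeIdealP_le_sup K (iInf_primeIdealP_eq_binomialEdgeIdeal (G.avoid {v}))
    (le_iInf₂ (fun T _ => iInf_le (primeIdealP K G) T) hf)
  exact mem_binomialEdgeIdeal_of_mem_completeNbhd K h₁ h₂
termination_by (G.support.ncard, Gᶜ.edgeSet.ncard)
decreasing_by
  · rw [SimpleGraph.support_completeNbhd]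
    exact .right _ (Set.ncard_lt_ncard (compl_lt_compl_iff_lt.2
      (SimpleGraph.lt_completeNbhd hv) |> SimpleGraph.edgeSet_strict_mono))
  · exact .left _ _ (Set.ncard_lt_ncard (SimpleGraph.support_avoid_singleton_ssubset hu))

end BinomialEdgeIdeal

/-- Let `G` be a graph and `v` a vertex of `G`.  Then the intersection of the ideals
`P_T(G)` over all subsets `T ⊆ V(G)` with `v ∈ T` equals `(x_v, y_v) + J_{G - v}`, where
`G - v` is the induced subgraph of `G` on `V(G) \ {v}` and `J_{G - v}` is regarded as an
ideal of `S`. -/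
theorem inf_primeIdealP_eq {V K : Type*} [Fintype V] [Field K] (G : SimpleGraph V) (v : V) :
    (⨅ T ∈ {T : Set V | v ∈ T}, primeIdealP K G T) =
      Ideal.span {MvPolynomial.X (Sum.inl v), MvPolynomial.X (Sum.inr v)} ⊔
        binomialEdgeIdeal K (G.avoid {v}) :=
  le_antisymm (iInf_primeIdealP_le_sup K (iInf_primeIdealP_eq_binomialEdgeIdeal K _)) <|
    le_iInf₂ fun T hv => sup_le (span_X_le_primeIdealP K hv) <|
      (binomialEdgeIdeal_mono K (G.avoid_le _)).trans (binomialEdgeIdeal_le_primeIdealP K G T)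
end
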